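/- arXiv:1501.05197 — 2 statements merged into one kernel-verified Lean document; each statement's English description precedes it below -/
import Mathlib

section
/- Let T be a tree with exactly one core v, which is a small core with three standard legs (so T has no regular cores). If L ⊆ V contains a local set for v and |L| ≥ 3, then L is a landmark set of T. -/
open SimpleGraph

variable {V : Type*} [Fintype V] [DecidableEq V]

/-- A vertex `τ` separates `u` and `w` if its distances to them differ. -/
def Separates (T : SimpleGraph V) (τ u w : V) : Prop :=
  T.dist τ u ≠ T.dist τ w

/-- There are at least two vertices of `L` separating `u` and `w`. -/
def HasTwoSeparators (T : SimpleGraph V) (L : Set V) (u w : V) : Prop :=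
  ∃ τ₁ ∈ L, ∃ τ₂ ∈ L, τ₁ ≠ τ₂ ∧ Separates T τ₁ u w ∧ Separates T τ₂ u w

/-- `L` is a landmark set (non-landmarks model, `k = 2`): every pair of distinct
vertices outside `L` is separated by at least two vertices of `L`. -/
def IsLandmarkSet (T : SimpleGraph V) (L : Set V) : Prop :=
  ∀ u w : V, u ≠ w → u ∉ L → w ∉ L → HasTwoSeparators T L u w

/-- A core is a vertex of degree at least 3. -/
def IsCore (T : SimpleGraph V) [DecidableRel T.Adj] (v : V) : Prop :=
  3 ≤ T.degree v

/-- The subtree of the neighbor `x` of `v`: in a tree, the connected component of `x`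
obtained by removing `v`, characterized via distances (`w` is in it iff the path from
`v` to `w` passes through `x`). -/
def Branch (T : SimpleGraph V) (v x : V) : Set V :=
  {w | T.dist v w = T.dist x w + 1}

/-- The subtree of the neighbor `x` of `v` is a (standard) leg:
a path containing no cores. -/
def IsStandardLeg (T : SimpleGraph V) [DecidableRel T.Adj] (v x : V) : Prop :=
  T.Adj v x ∧ ∀ w ∈ Branch T v x, T.degree w ≤ 2

/-- A short leg consists of a single vertex. -/
def IsShortLeg (T : SimpleGraph V) [DecidableRel T.Adj] (v x : V) : Prop :=
  IsStandardLeg T v x ∧ Branch T v x = {x}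

/-- A long leg is a standard leg that is not short. -/
def IsLongLeg (T : SimpleGraph V) [DecidableRel T.Adj] (v x : V) : Prop :=
  IsStandardLeg T v x ∧ Branch T v x ≠ {x}

/-- A small core: degree exactly 3, with at least two standard legs, one of which is short. -/
def IsSmallCore (T : SimpleGraph V) [DecidableRel T.Adj] (v : V) : Prop :=
  T.degree v = 3 ∧ ∃ x y : V, x ≠ y ∧ IsShortLeg T v x ∧ IsStandardLeg T v y

/-- A regular core is a core that is not small. -/
def IsRegularCore (T : SimpleGraph V) [DecidableRel T.Adj] (v : V) : Prop :=
  IsCore T v ∧ ¬ IsSmallCore T v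

/-- A modified leg of `v`: a subtree of a neighbor of `v` containing exactly one core,
which is a small core. -/
def IsModifiedLeg (T : SimpleGraph V) [DecidableRel T.Adj] (v x : V) : Prop :=
  T.Adj v x ∧ ∃ u ∈ Branch T v x, IsSmallCore T u ∧
    ∀ w ∈ Branch T v x, IsCore T w → w = u

/-- A g-leg is a standard leg or a modified leg. -/
def IsGLeg (T : SimpleGraph V) [DecidableRel T.Adj] (v x : V) : Prop :=
  IsStandardLeg T v x ∨ IsModifiedLeg T v x

/-- A minor core: a regular core which either (i) has at most one g-leg, or
(ii) has degree at least 4, no modified legs, exactly two standard legs one of which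
is short, and every other subtree of a neighbor contains a regular core. -/
def IsMinorCore (T : SimpleGraph V) [DecidableRel T.Adj] (v : V) : Prop :=
  IsRegularCore T v ∧
  ((∀ x y : V, IsGLeg T v x → IsGLeg T v y → x = y) ∨
   (4 ≤ T.degree v ∧ (∀ x : V, ¬ IsModifiedLeg T v x) ∧
    (∃ x y : V, x ≠ y ∧ IsShortLeg T v x ∧ IsStandardLeg T v y ∧
      ∀ z : V, IsStandardLeg T v z → z = x ∨ z = y) ∧
    (∀ z : V, T.Adj v z → ¬ IsGLeg T v z → ∃ w ∈ Branch T v z, IsRegularCore T w)))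

/-- A main core is a regular core that is not minor. -/
def IsMainCore (T : SimpleGraph V) [DecidableRel T.Adj] (v : V) : Prop :=
  IsRegularCore T v ∧ ¬ IsMinorCore T v

/-- The vertices lying on g-legs of `v`. -/
def GLegVerts (T : SimpleGraph V) [DecidableRel T.Adj] (v : V) : Set V :=
  {w | ∃ x : V, IsGLeg T v x ∧ w ∈ Branch T v x}

/-- Type (s,0) solution on the leg of neighbor `x` of `v`: the empty set. -/
def SolS0 (T : SimpleGraph V) (v x : V) (S : Set V) : Prop :=
  S ∩ Branch T v x = ∅

/-- Type (s,1) solution: one vertex of the leg whose position is at least 2. -/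
def SolS1 (T : SimpleGraph V) (v x : V) (S : Set V) : Prop :=
  ∃ w : V, S ∩ Branch T v x = {w} ∧ 2 ≤ T.dist v w

/-- Type (s,2) solution: at least two vertices of the leg. -/
def SolS2 (T : SimpleGraph V) (v x : V) (S : Set V) : Prop :=
  ∃ w₁ ∈ S ∩ Branch T v x, ∃ w₂ ∈ S ∩ Branch T v x, w₁ ≠ w₂

/-- Type (s,3) solution: exactly the vertex with position 1 (that is, `x`). -/
def SolS3 (T : SimpleGraph V) (v x : V) (S : Set V) : Prop :=
  S ∩ Branch T v x = {x}

/-- For a modified leg `x` of `v`: `u` is its small core (at position `T.dist v u`),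
and `a`, `b` are the two vertices at position `T.dist v u + 1`, where `b` is the
vertex of a short leg of `u` (the vertex `ℓ^b`) and `a` is the other one (`ℓ^a`). -/
def MLegPair (T : SimpleGraph V) [DecidableRel T.Adj] (v x u a b : V) : Prop :=
  u ∈ Branch T v x ∧ IsSmallCore T u ∧ a ≠ b ∧
  a ∈ Branch T v x ∧ b ∈ Branch T v x ∧
  T.dist v a = T.dist v u + 1 ∧ T.dist v b = T.dist v u + 1 ∧
  IsShortLeg T u b

/-- Type (m,1) solution on the modified leg `x` of `v`: either `{ℓ^a}` or `{ℓ^b}`. -/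
def SolM1 (T : SimpleGraph V) [DecidableRel T.Adj] (v x : V) (S : Set V) : Prop :=
  ∃ u a b : V, MLegPair T v x u a b ∧
    (S ∩ Branch T v x = {a} ∨ S ∩ Branch T v x = {b})

/-- Type (m,2) solution: contains neither `ℓ^a` nor `ℓ^b`, contains at least two
vertices of positions at least `i + 2`, and no vertex of position `i + 1`. -/
def SolM2 (T : SimpleGraph V) [DecidableRel T.Adj] (v x : V) (S : Set V) : Prop :=
  ∃ u a b : V, MLegPair T v x u a b ∧ a ∉ S ∧ b ∉ S ∧
    (∃ w₁ ∈ S ∩ Branch T v x, ∃ w₂ ∈ S ∩ Branch T v x, w₁ ≠ w₂ ∧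
      T.dist v u + 2 ≤ T.dist v w₁ ∧ T.dist v u + 2 ≤ T.dist v w₂) ∧
    ∀ w ∈ S ∩ Branch T v x, T.dist v w ≠ T.dist v u + 1

/-- Type (m,3) solution: at least two vertices, one of which is `ℓ^a` or `ℓ^b`. -/
def SolM3 (T : SimpleGraph V) [DecidableRel T.Adj] (v x : V) (S : Set V) : Prop :=
  ∃ u a b : V, MLegPair T v x u a b ∧
    (∃ w₁ ∈ S ∩ Branch T v x, ∃ w₂ ∈ S ∩ Branch T v x, w₁ ≠ w₂) ∧
    (a ∈ S ∨ b ∈ S)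

/-- `S` is a local set for the core `v`. -/
def IsLocalSet (T : SimpleGraph V) [DecidableRel T.Adj] (v : V) (S : Set V) : Prop :=
  S ⊆ GLegVerts T v ∧
  -- (1) at most one standard leg has a type (s,0) solution, and every standard leg
  -- has a solution of one of the types (s,0), (s,1), (s,2), (s,3)
  (∀ x y : V, IsStandardLeg T v x → IsStandardLeg T v y → x ≠ y →
    SolS0 T v x S → SolS0 T v y S → False) ∧
  (∀ x : V, IsStandardLeg T v x →
    SolS0 T v x S ∨ SolS1 T v x S ∨ SolS2 T v x S ∨ SolS3 T v x S) ∧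
  -- (2) every modified leg has a solution of type (m,1), (m,2) or (m,3)
  (∀ x : V, IsModifiedLeg T v x →
    SolM1 T v x S ∨ SolM2 T v x S ∨ SolM3 T v x S) ∧
  -- (3) if some standard leg has a type (s,0) solution, no modified leg has type (m,1)
  ((∃ x : V, IsStandardLeg T v x ∧ SolS0 T v x S) →
    ∀ y : V, IsModifiedLeg T v y → ¬ SolM1 T v y S) ∧
  -- (4) if some long leg has a type (s,0) solution, every other long leg has type (s,2)
  (∀ x : V, IsLongLeg T v x → SolS0 T v x S →
    ∀ y : V, IsLongLeg T v y → y ≠ x → SolS2 T v y S) ∧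
  -- (5) if some short leg has a type (s,0) solution, every long leg has type (s,2) or (s,3)
  ((∃ x : V, IsShortLeg T v x ∧ SolS0 T v x S) →
    ∀ y : V, IsLongLeg T v y → SolS2 T v y S ∨ SolS3 T v y S)

/-- A local set is thrifty if its solutions of types (s,2), (m,2) and (m,3)
consist of exactly two vertices each. -/
def IsThrifty (T : SimpleGraph V) [DecidableRel T.Adj] (v : V) (S : Set V) : Prop :=
  (∀ x : V, IsStandardLeg T v x → SolS2 T v x S → (S ∩ Branch T v x).ncard = 2) ∧
  (∀ x : V, IsModifiedLeg T v x → (SolM2 T v x S ∨ SolM3 T v x S) →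
    (S ∩ Branch T v x).ncard = 2)

set_option linter.unusedSectionVars false

section TreeInfra

variable {T : SimpleGraph V}

/-- In a tree, every path realizes the distance. -/
lemma tree_path_length (hT : T.IsTree) {u w : V} {p : T.Walk u w} (hp : p.IsPath) :
    p.length = T.dist u w := by
  obtain ⟨q, hq⟩ := (hT.isConnected u w).exists_walk_length_eq_dist
  have he : (⟨p, hp⟩ : T.Path u w) = ⟨q.bypass, q.bypass_isPath⟩ :=
    hT.IsAcyclic.path_unique _ _
  have hpq : p = q.bypass := congrArg Subtype.val he
  have h1 : p.length ≤ T.dist u w := by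
    rw [hpq, ← hq]; exact q.length_bypass_le
  exact le_antisymm h1 (SimpleGraph.dist_le p)

lemma exists_path (hT : T.IsTree) (u w : V) : ∃ p : T.Walk u w, p.IsPath := by
  obtain ⟨q⟩ := hT.isConnected u w
  exact ⟨q.bypass, q.bypass_isPath⟩

/-- Splitting a path at a support vertex gives additivity of distances. -/
lemma dist_split (hT : T.IsTree) {u w m : V} {p : T.Walk u w} (hp : p.IsPath)
    (hm : m ∈ p.support) : T.dist u m + T.dist m w = T.dist u w := by
  have hspec := p.take_spec hm
  have h1 : (p.takeUntil m hm).length = T.dist u m := tree_path_length hT (hp.takeUntil hm)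
  have h2 : (p.dropUntil m hm).length = T.dist m w := tree_path_length hT (hp.dropUntil hm)
  have h3 : p.length = T.dist u w := tree_path_length hT hp
  rw [← h1, ← h2, ← h3, ← SimpleGraph.Walk.length_append, hspec]

lemma adj_dist_ne (hT : T.IsTree) {a b : V} (hab : T.Adj a b) (w : V) :
    T.dist w a ≠ T.dist w b := by
  intro he
  obtain ⟨p, hp⟩ := exists_path hT w a
  by_cases hb : b ∈ p.support
  · have := dist_split hT hp hb
    have hba : T.dist b a = 1 := SimpleGraph.dist_eq_one_iff_adj.mpr hab.symm
    omega
  · have hq : (p.concat hab).IsPath := by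
      rw [← SimpleGraph.Walk.isPath_reverse_iff, SimpleGraph.Walk.reverse_concat]
      refine SimpleGraph.Walk.IsPath.cons hp.reverse ?_
      rwa [SimpleGraph.Walk.support_reverse, List.mem_reverse]
    have h1 : (p.concat hab).length = T.dist w b := tree_path_length hT hq
    have h2 : p.length = T.dist w a := tree_path_length hT hp
    rw [SimpleGraph.Walk.length_concat] at h1
    omega

lemma adj_dist_cases (hT : T.IsTree) {a b : V} (hab : T.Adj a b) (w : V) :
    T.dist w b = T.dist w a + 1 ∨ T.dist w a = T.dist w b + 1 := by
  have h1 : T.dist w b ≤ T.dist w a + T.dist a b := hT.isConnected.dist_triangle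
  have h2 : T.dist w a ≤ T.dist w b + T.dist b a := hT.isConnected.dist_triangle
  have hab1 : T.dist a b = 1 := SimpleGraph.dist_eq_one_iff_adj.mpr hab
  have hba1 : T.dist b a = 1 := SimpleGraph.dist_eq_one_iff_adj.mpr hab.symm
  have := adj_dist_ne hT hab w
  omega

lemma mem_branch_iff {v x w : V} : w ∈ Branch T v x ↔ T.dist v w = T.dist x w + 1 :=
  Iff.rfl

lemma notMem_branch_dist (hT : T.IsTree) {v x w : V} (hvx : T.Adj v x)
    (hw : w ∉ Branch T v x) : T.dist x w = T.dist v w + 1 := by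
  have c1 : T.dist v w = T.dist w v := SimpleGraph.dist_comm
  have c2 : T.dist x w = T.dist w x := SimpleGraph.dist_comm
  rcases adj_dist_cases hT hvx w with h | h
  · omega
  · exact absurd (mem_branch_iff.mpr (by omega)) hw

lemma dist_pos_of_mem_branch {v x w : V} (hw : w ∈ Branch T v x) : 1 ≤ T.dist v w := by
  have := mem_branch_iff.mp hw; omega

lemma ne_v_of_mem_branch {v x w : V} (hw : w ∈ Branch T v x) : w ≠ v := by
  intro h; subst h
  have := mem_branch_iff.mp hw
  rw [SimpleGraph.dist_self] at this; omega

lemma exists_branch (hT : T.IsTree) {v w : V} (hw : w ≠ v) :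
    ∃ x, T.Adj v x ∧ w ∈ Branch T v x := by
  obtain ⟨p, hp⟩ := exists_path hT v w
  cases p with
  | nil => exact absurd rfl hw.symm
  | cons h q =>
    rename_i x
    refine ⟨x, h, ?_⟩
    have h1 : q.length = T.dist x w := tree_path_length hT hp.of_cons
    have h2 : (SimpleGraph.Walk.cons h q).length = T.dist v w := tree_path_length hT hp
    rw [SimpleGraph.Walk.length_cons] at h2
    rw [mem_branch_iff]; omega

lemma branch_eq (hT : T.IsTree) {v x y w : V} (hvx : T.Adj v x) (hvy : T.Adj v y)
    (hwx : w ∈ Branch T v x) (hwy : w ∈ Branch T v y) : x = y := by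
  have hvnot : ∀ z : V, T.Adj v z → w ∈ Branch T v z →
      ∀ (p : T.Walk z w), p.IsPath → v ∉ p.support := by
    intro z hvz hwz p hp hvmem
    have := dist_split hT hp hvmem
    have h1 : p.length = T.dist z w := tree_path_length hT hp
    have h2 : T.dist z v = 1 := SimpleGraph.dist_eq_one_iff_adj.mpr hvz.symm
    have h3 := mem_branch_iff.mp hwz
    omega
  obtain ⟨px, hpx⟩ := exists_path hT x w
  obtain ⟨py, hpy⟩ := exists_path hT y w
  have hx : (SimpleGraph.Walk.cons hvx px).IsPath :=
    SimpleGraph.Walk.IsPath.cons hpx (hvnot x hvx hwx px hpx)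
  have hy : (SimpleGraph.Walk.cons hvy py).IsPath :=
    SimpleGraph.Walk.IsPath.cons hpy (hvnot y hvy hwy py hpy)
  have he : (⟨SimpleGraph.Walk.cons hvx px, hx⟩ : T.Path v w)
      = ⟨SimpleGraph.Walk.cons hvy py, hy⟩ := hT.IsAcyclic.path_unique _ _
  have hval : (SimpleGraph.Walk.cons hvx px : T.Walk v w) = SimpleGraph.Walk.cons hvy py :=
    congrArg Subtype.val he
  have hsup := congrArg SimpleGraph.Walk.support hval
  rw [SimpleGraph.Walk.support_cons, SimpleGraph.Walk.support_cons,
    px.support_eq_cons, py.support_eq_cons] at hsup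
  exact (List.cons.injEq _ _ _ _ ▸ ((List.cons.injEq _ _ _ _).mp hsup).2).1

end TreeInfra
section TreeInfra2

variable {T : SimpleGraph V}

lemma pred_exists (hT : T.IsTree) {v x w : V} (hvx : T.Adj v x)
    (hw : w ∈ Branch T v x) (h2 : 2 ≤ T.dist v w) :
    ∃ b, T.Adj w b ∧ b ∈ Branch T v x ∧ T.dist v b + 1 = T.dist v w := by
  have hbw := mem_branch_iff.mp hw
  obtain ⟨p, hp⟩ := exists_path hT x w
  have hlen : p.length = T.dist x w := tree_path_length hT hp
  have hxw : x ≠ w := by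
    intro h; subst h
    rw [SimpleGraph.dist_self] at hbw; omega
  obtain ⟨b, h, q, hq⟩ := SimpleGraph.Walk.exists_eq_cons_of_ne (Ne.symm hxw) p.reverse
  have hrevpath : p.reverse.IsPath := hp.reverse
  rw [hq] at hrevpath
  have hqpath : q.IsPath := hrevpath.of_cons
  have hqlen : q.length = T.dist b x := tree_path_length hT hqpath
  have hlenrev : p.reverse.length = T.dist x w := by
    rw [SimpleGraph.Walk.length_reverse]; exact hlen
  rw [hq, SimpleGraph.Walk.length_cons] at hlenrev
  have hbx : T.dist b x = T.dist x w - 1 := by omega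
  have htri1 : T.dist v b ≤ T.dist v x + T.dist x b := hT.isConnected.dist_triangle
  have htri2 : T.dist v w ≤ T.dist v b + T.dist b w := hT.isConnected.dist_triangle
  have hvx1 : T.dist v x = 1 := SimpleGraph.dist_eq_one_iff_adj.mpr hvx
  have hxb : T.dist x b = T.dist b x := SimpleGraph.dist_comm
  have hbw1 : T.dist b w = 1 := SimpleGraph.dist_eq_one_iff_adj.mpr h.symm
  have hdvb : T.dist v b + 1 = T.dist v w := by omega
  exact ⟨b, h, mem_branch_iff.mpr (by omega), hdvb⟩

lemma pred_unique (hT : T.IsTree) {v w b b' : V} (hb : T.Adj w b) (hb' : T.Adj w b')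
    (hd : T.dist v b + 1 = T.dist v w) (hd' : T.dist v b' + 1 = T.dist v w) : b = b' := by
  have key : ∀ c : V, T.Adj w c → T.dist v c + 1 = T.dist v w →
      ∀ (p : T.Walk v c), p.IsPath → w ∉ p.support := by
    intro c hc hcd p hp hmem
    have := dist_split hT hp hmem
    have h1 : p.length = T.dist v c := tree_path_length hT hp
    have h2 : T.dist w c = 1 := SimpleGraph.dist_eq_one_iff_adj.mpr hc
    omega
  obtain ⟨pb, hpb⟩ := exists_path hT v b
  obtain ⟨pb', hpb'⟩ := exists_path hT v b'
  have hqb : (pb.concat hb.symm).IsPath := by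
    rw [← SimpleGraph.Walk.isPath_reverse_iff, SimpleGraph.Walk.reverse_concat]
    refine SimpleGraph.Walk.IsPath.cons hpb.reverse ?_
    rw [SimpleGraph.Walk.support_reverse, List.mem_reverse]
    exact key b hb hd pb hpb
  have hqb' : (pb'.concat hb'.symm).IsPath := by
    rw [← SimpleGraph.Walk.isPath_reverse_iff, SimpleGraph.Walk.reverse_concat]
    refine SimpleGraph.Walk.IsPath.cons hpb'.reverse ?_
    rw [SimpleGraph.Walk.support_reverse, List.mem_reverse]
    exact key b' hb' hd' pb' hpb'
  have he : (⟨pb.concat hb.symm, hqb⟩ : T.Path v w) = ⟨pb'.concat hb'.symm, hqb'⟩ :=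
    hT.IsAcyclic.path_unique _ _
  have hval : pb.concat hb.symm = pb'.concat hb'.symm := congrArg Subtype.val he
  obtain ⟨hbb', -⟩ := SimpleGraph.Walk.concat_inj hval
  exact hbb'

lemma branch_closed (hT : T.IsTree) {v x a b : V} (hvx : T.Adj v x)
    (ha : a ∈ Branch T v x) (hab : T.Adj a b) (hbv : b ≠ v) : b ∈ Branch T v x := by
  have hda := mem_branch_iff.mp ha
  have hvx1 : T.dist v x = 1 := SimpleGraph.dist_eq_one_iff_adj.mpr hvx
  rcases adj_dist_cases hT hab v with h | h
  · -- dist v b = dist v a + 1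
    have htri1 : T.dist x b ≤ T.dist x a + T.dist a b := hT.isConnected.dist_triangle
    have htri2 : T.dist v b ≤ T.dist v x + T.dist x b := hT.isConnected.dist_triangle
    have hab1 : T.dist a b = 1 := SimpleGraph.dist_eq_one_iff_adj.mpr hab
    have hc1 : T.dist v b = T.dist b v := SimpleGraph.dist_comm
    have hc2 : T.dist v a = T.dist a v := SimpleGraph.dist_comm
    have hc3 : T.dist x b = T.dist b x := SimpleGraph.dist_comm
    have hc4 : T.dist x a = T.dist a x := SimpleGraph.dist_comm
    exact mem_branch_iff.mpr (by omega)
  · -- b is the predecessor of a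
    have hc1 : T.dist v b = T.dist b v := SimpleGraph.dist_comm
    have hc2 : T.dist v a = T.dist a v := SimpleGraph.dist_comm
    have h2 : 2 ≤ T.dist v a := by
      rcases Nat.lt_or_ge (T.dist v a) 2 with hlt | hge
      · exfalso
        have hb0 : T.dist v b = 0 := by omega
        exact hbv ((hT.isConnected.dist_eq_zero_iff).mp
          (by rw [SimpleGraph.dist_comm]; exact hb0))
      · exact hge
    obtain ⟨b₀, hb₀adj, hb₀mem, hb₀d⟩ := pred_exists hT hvx ha h2
    have : b = b₀ := pred_unique hT hab hb₀adj (by omega) hb₀d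
    rwa [this]

lemma walk_in_branch (hT : T.IsTree) {v x : V} (hvx : T.Adj v x) :
    ∀ {a w : V} (p : T.Walk a w), a ∈ Branch T v x → v ∉ p.support → w ∈ Branch T v x := by
  intro a w p
  induction p with
  | nil => intro h _; exact h
  | cons hadj q ih =>
    intro ha hv
    rename_i c d e
    have hd : d ≠ v := by
      intro h; subst h
      exact hv (by simp [SimpleGraph.Walk.support_cons, SimpleGraph.Walk.start_mem_support])
    exact ih (branch_closed hT hvx ha hadj hd)
      (fun hmem => hv (by simp [SimpleGraph.Walk.support_cons, hmem]))

lemma dist_cross (hT : T.IsTree) {v x u w : V} (hvx : T.Adj v x)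
    (hu : u ∈ Branch T v x) (hw : w ∉ Branch T v x) :
    T.dist u w = T.dist v u + T.dist v w := by
  obtain ⟨p, hp⟩ := exists_path hT u w
  by_cases hv : v ∈ p.support
  · have := dist_split hT hp hv
    have hc : T.dist u v = T.dist v u := SimpleGraph.dist_comm
    omega
  · exact absurd (walk_in_branch hT hvx p hu hv) hw

end TreeInfra2
section TreeInfra3

variable {T : SimpleGraph V} [DecidableRel T.Adj]

lemma eq_x_of_pos_one (hT : T.IsTree) {v x u : V} (hvx : T.Adj v x)
    (hu : u ∈ Branch T v x) (h1 : T.dist v u = 1) : u = x := by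
  have := mem_branch_iff.mp hu
  have h0 : T.dist x u = 0 := by omega
  exact ((hT.isConnected.dist_eq_zero_iff).mp (by rw [SimpleGraph.dist_comm]; exact h0))

lemma three_le_degree {p u₁ u₂ z : V} (h1 : T.Adj p u₁) (h2 : T.Adj p u₂) (h3 : T.Adj p z)
    (n12 : u₁ ≠ u₂) (n1z : u₁ ≠ z) (n2z : u₂ ≠ z) : 3 ≤ T.degree p := by
  have hsub : ({u₁, u₂, z} : Finset V) ⊆ T.neighborFinset p := by
    intro a ha
    simp only [Finset.mem_insert, Finset.mem_singleton] at ha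
    rw [SimpleGraph.mem_neighborFinset]
    rcases ha with rfl | rfl | rfl <;> assumption
  have hcard : ({u₁, u₂, z} : Finset V).card = 3 := by
    rw [Finset.card_insert_of_notMem (by simp [n12, n1z]),
      Finset.card_insert_of_notMem (by simp [n2z])]
    simp
  calc 3 = ({u₁, u₂, z} : Finset V).card := hcard.symm
    _ ≤ (T.neighborFinset p).card := Finset.card_le_card hsub
    _ = T.degree p := rfl

/-- On a standard leg, there is at most one vertex at each distance from `v`. -/
lemma branch_unique_pos (hT : T.IsTree) {v x : V} (hvx : T.Adj v x)
    (hleg : ∀ w ∈ Branch T v x, T.degree w ≤ 2) :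
    ∀ (n : ℕ) {u₁ u₂ : V}, u₁ ∈ Branch T v x → u₂ ∈ Branch T v x →
      T.dist v u₁ = n → T.dist v u₂ = n → u₁ = u₂ := by
  intro n
  induction n using Nat.strong_induction_on with
  | _ n ih =>
    intro u₁ u₂ h1 h2 hd1 hd2
    have hp1 : 1 ≤ T.dist v u₁ := dist_pos_of_mem_branch h1
    by_cases hn1 : n = 1
    · subst hn1
      rw [eq_x_of_pos_one hT hvx h1 hd1, eq_x_of_pos_one hT hvx h2 hd2]
    · have hn2 : 2 ≤ n := by omega
      by_contra hne
      obtain ⟨b₁, hb₁adj, hb₁mem, hb₁d⟩ := pred_exists hT hvx h1 (by omega)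
      obtain ⟨b₂, hb₂adj, hb₂mem, hb₂d⟩ := pred_exists hT hvx h2 (by omega)
      have hbb : b₁ = b₂ := ih (n-1) (by omega) hb₁mem hb₂mem (by omega) (by omega)
      subst hbb
      have hdeg := hleg b₁ hb₁mem
      have hne1 : u₁ ≠ b₁ := fun h => by subst h; omega
      have hne2 : u₂ ≠ b₁ := fun h => by subst h; omega
      by_cases hn2' : n = 2
      · -- b₁ = x, and v is a third neighbor
        have hbx : b₁ = x := eq_x_of_pos_one hT hvx hb₁mem (by omega)
        subst hbx
        have hvne1 : u₁ ≠ v := ne_v_of_mem_branch h1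
        have hvne2 : u₂ ≠ v := ne_v_of_mem_branch h2
        have := three_le_degree hb₁adj.symm hb₂adj.symm hvx.symm hne hvne1 hvne2
        omega
      · -- b₁ has its own predecessor z
        obtain ⟨z, hzadj, hzmem, hzd⟩ := pred_exists hT hvx hb₁mem (by omega)
        have hz1 : u₁ ≠ z := fun h => by subst h; omega
        have hz2 : u₂ ≠ z := fun h => by subst h; omega
        have := three_le_degree hb₁adj.symm hb₂adj.symm hzadj hne hz1 hz2
        omega

/-- Distance between two vertices of the same standard leg. -/
lemma dist_same_branch (hT : T.IsTree) {v x : V} (hvx : T.Adj v x)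
    (hleg : ∀ w ∈ Branch T v x, T.degree w ≤ 2) :
    ∀ (n : ℕ) {u w : V}, u ∈ Branch T v x → w ∈ Branch T v x →
      T.dist v u ≤ T.dist v w → T.dist v w = n →
      T.dist u w = T.dist v w - T.dist v u := by
  intro n
  induction n using Nat.strong_induction_on with
  | _ n ih =>
    intro u w hu hw hle hn
    have hp : 1 ≤ T.dist v u := dist_pos_of_mem_branch hu
    by_cases heq : T.dist v u = T.dist v w
    · have : u = w := branch_unique_pos hT hvx hleg n hu hw (by omega) hn
      subst this
      rw [SimpleGraph.dist_self]; omega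
    · have hlt : T.dist v u < T.dist v w := by omega
      obtain ⟨b, hbadj, hbmem, hbd⟩ := pred_exists hT hvx hw (by omega)
      have hub : T.dist u b = T.dist v b - T.dist v u :=
        ih (n-1) (by omega) hu hbmem (by omega) (by omega)
      have htri1 : T.dist u w ≤ T.dist u b + T.dist b w := hT.isConnected.dist_triangle
      have htri2 : T.dist v w ≤ T.dist v u + T.dist u w := hT.isConnected.dist_triangle
      have hbw1 : T.dist b w = 1 := SimpleGraph.dist_eq_one_iff_adj.mpr hbadj.symm
      omega

end TreeInfra3
section MainLemmas

variable {T : SimpleGraph V} [DecidableRel T.Adj]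

/-- Distance between two vertices of a standard leg, as a disjunction usable by omega. -/
lemma dist_abs (hT : T.IsTree) {v x a b : V} (hvx : T.Adj v x)
    (hleg : ∀ w ∈ Branch T v x, T.degree w ≤ 2)
    (ha : a ∈ Branch T v x) (hb : b ∈ Branch T v x) :
    T.dist a b + T.dist v a = T.dist v b ∨ T.dist a b + T.dist v b = T.dist v a := by
  rcases le_total (T.dist v a) (T.dist v b) with h | h
  · left
    have := dist_same_branch hT hvx hleg (T.dist v b) ha hb h rfl
    omega
  · right
    have := dist_same_branch hT hvx hleg (T.dist v a) hb ha h rfl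
    have hc : T.dist a b = T.dist b a := SimpleGraph.dist_comm
    omega

/-- In "case B" (different legs, equal positions), every vertex of the leg of `u`
separates `u` and `w`. -/
lemma sepB (hT : T.IsTree) {v x y u w τ : V} (hvx : T.Adj v x) (hvy : T.Adj v y)
    (hxy : x ≠ y) (hleg : ∀ z ∈ Branch T v x, T.degree z ≤ 2)
    (hu : u ∈ Branch T v x) (hw : w ∈ Branch T v y) (hd : T.dist v u = T.dist v w)
    (hτ : τ ∈ Branch T v x) : T.dist τ u ≠ T.dist τ w := by
  have hwnx : w ∉ Branch T v x := fun h => hxy (branch_eq hT hvx hvy h hw)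
  have hcross : T.dist τ w = T.dist v τ + T.dist v w := dist_cross hT hvx hτ hwnx
  have habs := dist_abs hT hvx hleg hτ hu
  have hpu : 1 ≤ T.dist v u := dist_pos_of_mem_branch hu
  have hpτ : 1 ≤ T.dist v τ := dist_pos_of_mem_branch hτ
  omega

/-- In case B, if `S` misses the leg of `u`, it has two vertices on the leg of `w`. -/
lemma two_in_leg (hT : T.IsTree) {v : V}
    (hlegs : ∀ x : V, T.Adj v x → IsStandardLeg T v x)
    {S L : Set V} (hSL : S ⊆ L) (hloc : IsLocalSet T v S)
    {x y u w : V} (hvx : T.Adj v x) (hvy : T.Adj v y) (hxy : x ≠ y)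
    (hu : u ∈ Branch T v x) (hw : w ∈ Branch T v y) (hd : T.dist v u = T.dist v w)
    (hwL : w ∉ L) (hx0 : S ∩ Branch T v x = ∅) :
    ∃ τ₁ ∈ S ∩ Branch T v y, ∃ τ₂ ∈ S ∩ Branch T v y, τ₁ ≠ τ₂ := by
  obtain ⟨-, h1, -, -, -, h5, h6⟩ := hloc
  have hlegx := hlegs x hvx
  have hlegy := hlegs y hvy
  have hSyne : S ∩ Branch T v y ≠ ∅ := fun h => h1 x y hlegx hlegy hxy hx0 h
  by_cases hyshort : Branch T v y = {y}
  · -- w = y would be in S ⊆ L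
    exfalso
    have hwY : w = y := Set.mem_singleton_iff.mp (hyshort ▸ hw)
    obtain ⟨s, hsS, hsY⟩ := Set.nonempty_iff_ne_empty.mpr hSyne
    have hsy : s = y := Set.mem_singleton_iff.mp (hyshort ▸ hsY)
    exact hwL (hwY ▸ (hsy ▸ hSL hsS))
  · by_cases hxshort : Branch T v x = {x}
    · -- the leg of u is short, so u = x and positions are 1
      have hux : u = x := Set.mem_singleton_iff.mp (hxshort ▸ hu)
      rcases h6 ⟨x, ⟨hlegx, hxshort⟩, hx0⟩ y ⟨hlegy, hyshort⟩ with hS2 | hS3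
      · exact hS2
      · exfalso
        have hd1 : T.dist v w = 1 := by
          have : T.dist v u = 1 := by
            rw [hux]; exact SimpleGraph.dist_eq_one_iff_adj.mpr hvx
          omega
        have hwY : w = y := eq_x_of_pos_one hT hvy hw hd1
        have hyS : y ∈ S := by
          have : y ∈ S ∩ Branch T v y := hS3 ▸ Set.mem_singleton y
          exact this.1
        exact hwL (hwY ▸ hSL hyS)
    · exact h5 x ⟨hlegx, hxshort⟩ hx0 y ⟨hlegy, hyshort⟩ hxy.symm

end MainLemmas
section NonSep

variable {T : SimpleGraph V} [DecidableRel T.Adj]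

/-- Non-separators when one of the two vertices is `v` itself. -/
lemma nonsep_u_eq_v (hT : T.IsTree) {v w : V}
    (hlegs : ∀ x : V, T.Adj v x → IsStandardLeg T v x) (hw : w ≠ v)
    {τ₁ τ₂ : V} (h₁ : T.dist τ₁ v = T.dist τ₁ w) (h₂ : T.dist τ₂ v = T.dist τ₂ w) :
    τ₁ = τ₂ := by
  obtain ⟨y, hvy, hwy⟩ := exists_branch hT hw
  have hq : 1 ≤ T.dist v w := dist_pos_of_mem_branch hwy
  have key : ∀ τ : V, T.dist τ v = T.dist τ w →
      τ ∈ Branch T v y ∧ 2 * T.dist v τ = T.dist v w := by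
    intro τ hτ
    have hτv : τ ≠ v := by
      intro h
      rw [h, SimpleGraph.dist_self] at hτ
      omega
    obtain ⟨z, hvz, hτz⟩ := exists_branch hT hτv
    have hcv : T.dist τ v = T.dist v τ := SimpleGraph.dist_comm
    by_cases hwz : w ∈ Branch T v z
    · have hzy : z = y := branch_eq hT hvz hvy hwz hwy
      subst hzy
      have habs := dist_abs hT hvz (hlegs z hvz).2 hτz hwz
      have hpτ : 1 ≤ T.dist v τ := dist_pos_of_mem_branch hτz
      exact ⟨hτz, by omega⟩
    · exfalso
      have hcross : T.dist τ w = T.dist v τ + T.dist v w := dist_cross hT hvz hτz hwz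
      omega
  obtain ⟨m₁, hd₁⟩ := key τ₁ h₁
  obtain ⟨m₂, hd₂⟩ := key τ₂ h₂
  exact branch_unique_pos hT hvy (hlegs y hvy).2 (T.dist v τ₁) m₁ m₂ rfl (by omega)

/-- Outside "case B", there is at most one vertex failing to separate `u` and `w`. -/
lemma nonsep_subsingleton (hT : T.IsTree) {v u w : V}
    (hlegs : ∀ x : V, T.Adj v x → IsStandardLeg T v x) (huw : u ≠ w)
    (hnB : ¬ ∃ x y, T.Adj v x ∧ T.Adj v y ∧ x ≠ y ∧ u ∈ Branch T v x ∧ w ∈ Branch T v y ∧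
      T.dist v u = T.dist v w)
    {τ₁ τ₂ : V} (h₁ : T.dist τ₁ u = T.dist τ₁ w) (h₂ : T.dist τ₂ u = T.dist τ₂ w) :
    τ₁ = τ₂ := by
  by_cases huv : u = v
  · exact nonsep_u_eq_v hT hlegs (huv ▸ huw.symm : w ≠ v) (huv ▸ h₁) (huv ▸ h₂)
  by_cases hwv : w = v
  · exact nonsep_u_eq_v hT hlegs (hwv ▸ huw : u ≠ v) (hwv ▸ h₁.symm) (hwv ▸ h₂.symm)
  obtain ⟨x, hvx, hux⟩ := exists_branch hT huv
  obtain ⟨y, hvy, hwy⟩ := exists_branch hT hwv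
  have hp : 1 ≤ T.dist v u := dist_pos_of_mem_branch hux
  have hq : 1 ≤ T.dist v w := dist_pos_of_mem_branch hwy
  by_cases hxy : x = y
  · -- same leg
    subst hxy
    have hpq : T.dist v u ≠ T.dist v w := by
      intro h
      exact huw (branch_unique_pos hT hvx (hlegs x hvx).2 (T.dist v u) hux hwy rfl h.symm)
    have key : ∀ τ : V, T.dist τ u = T.dist τ w →
        τ ∈ Branch T v x ∧ 2 * T.dist v τ = T.dist v u + T.dist v w := by
      intro τ hτ
      have hτv : τ ≠ v := by
        intro h; subst h
        exact hpq hτ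
      obtain ⟨z, hvz, hτz⟩ := exists_branch hT hτv
      by_cases huz : u ∈ Branch T v z
      · have hzx : z = x := branch_eq hT hvz hvx huz hux
        subst hzx
        have habs1 := dist_abs hT hvz (hlegs z hvz).2 hτz hux
        have habs2 := dist_abs hT hvz (hlegs z hvz).2 hτz hwy
        exact ⟨hτz, by omega⟩
      · exfalso
        have hwz : w ∉ Branch T v z := by
          intro hwz
          exact huz ((branch_eq hT hvz hvx hwz hwy) ▸ hux)
        have hc1 : T.dist τ u = T.dist v τ + T.dist v u := dist_cross hT hvz hτz huz
        have hc2 : T.dist τ w = T.dist v τ + T.dist v w := dist_cross hT hvz hτz hwz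
        omega
    obtain ⟨m₁, hd₁⟩ := key τ₁ h₁
    obtain ⟨m₂, hd₂⟩ := key τ₂ h₂
    exact branch_unique_pos hT hvx (hlegs x hvx).2 (T.dist v τ₁) m₁ m₂ rfl (by omega)
  · -- different legs; by hnB the positions differ
    have hpq : T.dist v u ≠ T.dist v w := fun h => hnB ⟨x, y, hvx, hvy, hxy, hux, hwy, h⟩
    have hwnx : w ∉ Branch T v x := fun h => hxy (branch_eq hT hvx hvy h hwy)
    have huny : u ∉ Branch T v y := fun h => hxy (branch_eq hT hvx hvy hux h)
    have key : ∀ τ : V, T.dist τ u = T.dist τ w →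
        (τ ∈ Branch T v x ∧ 2 * T.dist v τ + T.dist v w = T.dist v u) ∨
        (τ ∈ Branch T v y ∧ 2 * T.dist v τ + T.dist v u = T.dist v w) := by
      intro τ hτ
      have hτv : τ ≠ v := by
        intro h; subst h
        exact hpq hτ
      obtain ⟨z, hvz, hτz⟩ := exists_branch hT hτv
      have hpτ : 1 ≤ T.dist v τ := dist_pos_of_mem_branch hτz
      by_cases huz : u ∈ Branch T v z
      · have hzx : z = x := branch_eq hT hvz hvx huz hux
        subst hzx
        have habs := dist_abs hT hvz (hlegs z hvz).2 hτz hux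
        have hc : T.dist τ w = T.dist v τ + T.dist v w :=
          dist_cross hT hvz hτz (fun h => hxy (branch_eq hT hvz hvy h hwy))
        exact Or.inl ⟨hτz, by omega⟩
      · by_cases hwz : w ∈ Branch T v z
        · have hzy : z = y := branch_eq hT hvz hvy hwz hwy
          subst hzy
          have habs := dist_abs hT hvz (hlegs z hvz).2 hτz hwy
          have hc : T.dist τ u = T.dist v τ + T.dist v u :=
            dist_cross hT hvz hτz (fun h => hxy (branch_eq hT hvx hvz hux h))
          exact Or.inr ⟨hτz, by omega⟩
        · exfalso
          have hc1 : T.dist τ u = T.dist v τ + T.dist v u := dist_cross hT hvz hτz huz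
          have hc2 : T.dist τ w = T.dist v τ + T.dist v w := dist_cross hT hvz hτz hwz
          omega
    rcases key τ₁ h₁ with ⟨m₁, hd₁⟩ | ⟨m₁, hd₁⟩ <;> rcases key τ₂ h₂ with ⟨m₂, hd₂⟩ | ⟨m₂, hd₂⟩
    · exact branch_unique_pos hT hvx (hlegs x hvx).2 (T.dist v τ₁) m₁ m₂ rfl (by omega)
    · omega
    · omega
    · exact branch_unique_pos hT hvy (hlegs y hvy).2 (T.dist v τ₁) m₁ m₂ rfl (by omega)

end NonSep
/-- a tree whose only core `v` is a small core with three standard legs;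
if `L` contains a local set for `v` and `|L| ≥ 3`, then `L` is a landmark set. -/
theorem single_small_core_three_landmarks
    (T : SimpleGraph V) [DecidableRel T.Adj] (hT : T.IsTree)
    (v : V) (hv : IsSmallCore T v) (huniq : ∀ w : V, IsCore T w → w = v)
    (hlegs : ∀ x : V, T.Adj v x → IsStandardLeg T v x)
    (L : Set V) (hloc : ∃ S : Set V, S ⊆ L ∧ IsLocalSet T v S)
    (hcard : 3 ≤ L.ncard) :
    IsLandmarkSet T L := by
  obtain ⟨S, hSL, hlocS⟩ := hloc
  intro u w huw huL hwL
  by_cases hB : ∃ x y, T.Adj v x ∧ T.Adj v y ∧ x ≠ y ∧ u ∈ Branch T v x ∧ w ∈ Branch T v y ∧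
      T.dist v u = T.dist v w
  · -- Case B: different legs, same position; use the local set
    obtain ⟨x, y, hvx, hvy, hxy, hux, hwy, hd⟩ := hB
    have sepx : ∀ τ ∈ Branch T v x, Separates T τ u w := fun τ hτ =>
      sepB hT hvx hvy hxy (hlegs x hvx).2 hux hwy hd hτ
    have sepy : ∀ τ ∈ Branch T v y, Separates T τ u w := fun τ hτ h =>
      sepB hT hvy hvx hxy.symm (hlegs y hvy).2 hwy hux hd.symm hτ h.symm
    by_cases hx0 : S ∩ Branch T v x = ∅
    · obtain ⟨τ₁, hτ₁, τ₂, hτ₂, hne⟩ :=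
        two_in_leg hT hlegs hSL hlocS hvx hvy hxy hux hwy hd hwL hx0
      exact ⟨τ₁, hSL hτ₁.1, τ₂, hSL hτ₂.1, hne, sepy τ₁ hτ₁.2, sepy τ₂ hτ₂.2⟩
    · by_cases hy0 : S ∩ Branch T v y = ∅
      · obtain ⟨τ₁, hτ₁, τ₂, hτ₂, hne⟩ :=
          two_in_leg hT hlegs hSL hlocS hvy hvx hxy.symm hwy hux hd.symm huL hy0
        exact ⟨τ₁, hSL hτ₁.1, τ₂, hSL hτ₂.1, hne, sepx τ₁ hτ₁.2, sepx τ₂ hτ₂.2⟩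
      · obtain ⟨a, haS, haX⟩ := Set.nonempty_iff_ne_empty.mpr hx0
        obtain ⟨b, hbS, hbY⟩ := Set.nonempty_iff_ne_empty.mpr hy0
        have hab : a ≠ b := fun h => hxy (branch_eq hT hvx hvy haX (h ▸ hbY))
        exact ⟨a, hSL haS, b, hSL hbS, hab, sepx a haX, sepy b hbY⟩
  · -- Case A: at most one non-separator; use |L| ≥ 3
    have hsub : ∀ τ₁ τ₂ : V, ¬ Separates T τ₁ u w → ¬ Separates T τ₂ u w → τ₁ = τ₂ := by
      intro τ₁ τ₂ hs₁ hs₂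
      exact nonsep_subsingleton hT hlegs huw hB (not_ne_iff.mp hs₁) (not_ne_iff.mp hs₂)
    -- extract three distinct elements of L
    have hfin : L.Finite := Set.toFinite L
    obtain ⟨a, haL⟩ : L.Nonempty := by
      rcases Set.eq_empty_or_nonempty L with h | h
      · rw [h, Set.ncard_empty] at hcard; omega
      · exact h
    have hd1 : (L \ {a}).ncard = L.ncard - 1 := Set.ncard_diff_singleton_of_mem haL
    obtain ⟨b, hbL'⟩ : (L \ {a}).Nonempty := by
      rcases Set.eq_empty_or_nonempty (L \ {a}) with h | h
      · rw [h, Set.ncard_empty] at hd1; omega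
      · exact h
    have hd2 : ((L \ {a}) \ {b}).ncard = (L \ {a}).ncard - 1 :=
      Set.ncard_diff_singleton_of_mem hbL'
    obtain ⟨c, hcL'⟩ : ((L \ {a}) \ {b}).Nonempty := by
      rcases Set.eq_empty_or_nonempty ((L \ {a}) \ {b}) with h | h
      · rw [h, Set.ncard_empty] at hd2; omega
      · exact h
    have hbL : b ∈ L := hbL'.1
    have hcL : c ∈ L := hcL'.1.1
    have hba : b ≠ a := hbL'.2
    have hca : c ≠ a := hcL'.1.2
    have hcb : c ≠ b := hcL'.2
    by_cases s1 : Separates T a u w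
    · by_cases s2 : Separates T b u w
      · exact ⟨a, haL, b, hbL, hba.symm, s1, s2⟩
      · by_cases s3 : Separates T c u w
        · exact ⟨a, haL, c, hcL, hca.symm, s1, s3⟩
        · exact absurd (hsub b c s2 s3) hcb.symm
    · by_cases s2 : Separates T b u w
      · by_cases s3 : Separates T c u w
        · exact ⟨b, hbL, c, hcL, hcb.symm, s2, s3⟩
        · exact absurd (hsub a c s1 s3) hca.symm
      · exact absurd (hsub a b s1 s2) hba.symm
end

section
/- Let T be a tree with exactly one core v, which is a small core with three standard legs (so T has no regular cores). If L ⊆ V contains a local set for v and |L| ≤ 2, then L is a landmark set of T if and only if L consists of the two vertices of two short legs of v. -/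
open SimpleGraph

variable {V : Type*} [Fintype V] [DecidableEq V]

/-!
For a neighbour `x` of `v` and a vertex `u` outside the branch at `x`, `d(x, u) = d(v, u) + 1`.
Hence a landmark lying in one branch of `v` sees the roots of the two other branches at the same
distance, and the root `x` of a long leg sees `v` and the vertex at position 2 of its leg at the
same distance. A local set meets two of the three legs, so a landmark set with at most two
elements consists of one vertex in each of two legs; by the two observations these are the roots
of their legs and the legs are short. Conversely, if `L` consists of the roots of two short legs,
every other vertex is `v` or lies on the third leg, where it is determined by its distance to `v`,
and both landmarks see it at that distance plus one.
-/

section LandmarksInTrees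

omit [Fintype V] [DecidableEq V]

variable {T : SimpleGraph V} {n : ℕ} {u v w x y σ₁ σ₂ t₁ t₂ : V}

theorem SimpleGraph.Connected.exists_adj_dist_eq_of_dist_eq_add_one (hT : T.Connected)
    (h : T.dist u w = n + 1) : ∃ x, T.Adj u x ∧ T.dist x w = n := by
  obtain ⟨p, hp⟩ := hT.exists_walk_length_eq_dist u w
  cases p with
  | nil => simp at h
  | @cons _ x _ hadj q =>
    refine ⟨x, hadj, le_antisymm ?_ ?_⟩
    · have := dist_le q
      simp only [Walk.length_cons] at hp
      omega
    · have : T.dist u w ≤ T.dist u x + T.dist x w := hT.dist_triangle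
      rw [dist_eq_one_iff_adj.mpr hadj] at this
      omega

theorem mem_branch : w ∈ Branch T v x ↔ T.dist v w = T.dist x w + 1 := Iff.rfl

theorem self_mem_branch (hx : T.Adj v x) : x ∈ Branch T v x := by
  rw [mem_branch, dist_self, dist_eq_one_iff_adj.mpr hx]

theorem exists_mem_branch_of_ne (hT : T.Connected) (hu : u ≠ v) :
    ∃ x, T.Adj v x ∧ u ∈ Branch T v x := by
  obtain ⟨n, hn⟩ := Nat.exists_eq_add_one.mpr (hT.pos_dist_of_ne hu.symm)
  obtain ⟨x, hx, hxu⟩ := hT.exists_adj_dist_eq_of_dist_eq_add_one hn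
  exact ⟨x, hx, by rw [mem_branch, hn, hxu]⟩

theorem dist_eq_add_one_of_notMem_branch (hT : T.IsTree) (hx : T.Adj v x)
    (hu : u ∉ Branch T v x) : T.dist x u = T.dist v u + 1 := by
  rw [mem_branch] at hu
  rw [SimpleGraph.dist_comm, SimpleGraph.dist_comm (u := v)]
  rcases hT.dist_eq_dist_add_one_of_adj u hx with h | h
  · rw [SimpleGraph.dist_comm, SimpleGraph.dist_comm (u := u)] at h
    exact absurd h hu
  · exact h

/-- In a tree the first step of the geodesic from `v` to `w` is unique. -/
theorem branch_disjoint (hT : T.IsTree) (hx : T.Adj v x) (hy : T.Adj v y) (hxy : x ≠ y) :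
    Disjoint (Branch T v x) (Branch T v y) := by
  refine Set.disjoint_left.mpr fun w hwx hwy => hxy ?_
  obtain ⟨p, -, hp⟩ := hT.connected.exists_path_of_dist x w
  obtain ⟨q, -, hq⟩ := hT.connected.exists_path_of_dist y w
  have hp' : (Walk.cons hx p).IsPath :=
    Walk.isPath_of_length_eq_dist _ (by rw [Walk.length_cons, hp, ← mem_branch.mp hwx])
  have hq' : (Walk.cons hy q).IsPath :=
    Walk.isPath_of_length_eq_dist _ (by rw [Walk.length_cons, hq, ← mem_branch.mp hwy])
  have := congrArg (fun r : T.Path v w => r.1.snd)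
    ((hT.isAcyclic.subsingleton_path v w).elim ⟨_, hp'⟩ ⟨_, hq'⟩)
  simpa using this

theorem exists_mem_branch_dist_eq_two (hT : T.IsTree) (hx : T.Adj v x)
    (h : Branch T v x ≠ {x}) : ∃ y ∈ Branch T v x, T.dist v y = 2 := by
  obtain ⟨w, hw, hwx⟩ : ∃ w ∈ Branch T v x, w ≠ x := by
    by_contra! h'
    exact h (Set.eq_singleton_iff_unique_mem.mpr ⟨self_mem_branch hx, h'⟩)
  obtain ⟨n, hn⟩ := Nat.exists_eq_add_one.mpr (hT.connected.pos_dist_of_ne hwx.symm)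
  obtain ⟨y, hxy, hyw⟩ := hT.connected.exists_adj_dist_eq_of_dist_eq_add_one hn
  have hvx : T.dist v x = 1 := dist_eq_one_iff_adj.mpr hx
  have hvw : T.dist v w ≤ T.dist v y + T.dist y w := hT.connected.dist_triangle
  rw [mem_branch] at hw
  have hvy : T.dist v y = 2 := by
    rcases hT.dist_eq_dist_add_one_of_adj v hxy with h | h <;> omega
  exact ⟨y, by rw [mem_branch, hvy, dist_eq_one_iff_adj.mpr hxy], hvy⟩

theorem exists_adj_mem_branch_of_dist_eq (hT : T.IsTree) (hx : T.Adj v x)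
    (hw : w ∈ Branch T v x) (h : T.dist v w = n + 2) :
    ∃ p ∈ Branch T v x, T.Adj p w ∧ T.dist v p = n + 1 := by
  rw [mem_branch] at hw
  obtain ⟨p, hwp, hpx⟩ :=
    hT.connected.exists_adj_dist_eq_of_dist_eq_add_one (u := w) (w := x) (n := n)
      (by rw [SimpleGraph.dist_comm]; omega)
  rw [SimpleGraph.dist_comm] at hpx
  have hvw : T.dist v w ≤ T.dist v p + T.dist p w := hT.connected.dist_triangle
  rw [dist_eq_one_iff_adj.mpr hwp.symm] at hvw
  have hvp : T.dist v p = n + 1 := by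
    rcases hT.dist_eq_dist_add_one_of_adj p hx with h | h <;>
      rw [SimpleGraph.dist_comm, SimpleGraph.dist_comm (u := p)] at h <;> omega
  exact ⟨p, by rw [mem_branch]; omega, hwp.symm, hvp⟩

theorem SimpleGraph.card_le_degree_of_forall_adj [Fintype (T.neighborSet v)] {s : Finset V}
    (hs : ∀ a ∈ s, T.Adj v a) : s.card ≤ T.degree v :=
  Finset.card_le_card fun a ha => (mem_neighborFinset T v a).mpr (hs a ha)

theorem SimpleGraph.exists_adj_ne_ne_of_three_le_degree [Fintype (T.neighborSet v)]
    (h : 3 ≤ T.degree v) (a b : V) : ∃ c, T.Adj v c ∧ c ≠ a ∧ c ≠ b := by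
  classical
  have : 0 < (((T.neighborFinset v).erase a).erase b).card := by
    have h₁ := Finset.pred_card_le_card_erase (s := T.neighborFinset v) (a := a)
    have h₂ := Finset.pred_card_le_card_erase (s := (T.neighborFinset v).erase a) (a := b)
    rw [card_neighborFinset_eq_degree] at h₁
    omega
  obtain ⟨c, hc⟩ := Finset.card_pos.mp this
  simp only [Finset.mem_erase, mem_neighborFinset] at hc
  exact ⟨c, hc.2.2, hc.2.1, hc.1⟩

theorem SimpleGraph.eq_of_adj_of_degree_eq_three [Fintype (T.neighborSet v)]
    (h : T.degree v = 3) (hxy : x ≠ y) (hx : T.Adj v x) (hy : T.Adj v y) {s t : V}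
    (hs : T.Adj v s) (ht : T.Adj v t) (hsx : s ≠ x) (hsy : s ≠ y) (htx : t ≠ x) (hty : t ≠ y) :
    s = t := by
  classical
  by_contra hst
  have h₄ : ({x, y, s, t} : Finset V).card = 4 := by
    rw [Finset.card_insert_of_notMem (by simp [hxy, hsx.symm, htx.symm]),
      Finset.card_insert_of_notMem (by simp [hsy.symm, hty.symm]),
      Finset.card_pair hst]
  have := card_le_degree_of_forall_adj (T := T) (v := v) (s := {x, y, s, t})
    (by simp [hx, hy, hs, ht])
  omega

theorem IsStandardLeg.injOn_dist [Fintype V] [DecidableRel T.Adj] (hT : T.IsTree)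
    (hleg : IsStandardLeg T v x) : Set.InjOn (T.dist v) (Branch T v x) := by
  classical
  suffices h : ∀ n, ∀ w₁ ∈ Branch T v x, ∀ w₂ ∈ Branch T v x,
      T.dist v w₁ = n → T.dist v w₂ = n → w₁ = w₂ from
    fun w₁ h₁ w₂ h₂ he => h _ w₁ h₁ w₂ h₂ rfl he.symm
  intro n
  induction n with
  | zero =>
    intro w₁ h₁ _ _ e₁ _
    rw [mem_branch] at h₁
    omega
  | succ n ih =>
    intro w₁ h₁ w₂ h₂ e₁ e₂
    rcases n with _ | n
    · rw [mem_branch] at h₁ h₂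
      have hx₁ : x = w₁ := hT.connected.dist_eq_zero_iff.mp (by omega)
      have hx₂ : x = w₂ := hT.connected.dist_eq_zero_iff.mp (by omega)
      exact hx₁.symm.trans hx₂
    obtain ⟨p, hp, hpw₁, hvp⟩ := exists_adj_mem_branch_of_dist_eq hT hleg.1 h₁ e₁
    obtain ⟨p', hp', hpw₂, hvp'⟩ := exists_adj_mem_branch_of_dist_eq hT hleg.1 h₂ e₂
    obtain rfl : p = p' := ih p hp p' hp' hvp hvp'
    by_contra hne
    -- otherwise `p` has the two children `w₁`, `w₂` and a parent `q`
    obtain ⟨q, hpq, hqv⟩ := hT.connected.exists_adj_dist_eq_of_dist_eq_add_one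
      (u := p) (w := v) (by rw [SimpleGraph.dist_comm, hvp])
    rw [SimpleGraph.dist_comm] at hqv
    have h₃ : ({w₁, w₂, q} : Finset V).card = 3 :=
      Finset.card_eq_three.mpr ⟨w₁, w₂, q, hne, by rintro rfl; omega, by rintro rfl; omega, rfl⟩
    have := card_le_degree_of_forall_adj (T := T) (v := p) (s := {w₁, w₂, q})
      (by simp [hpw₁, hpw₂, hpq])
    have := hleg.2 p hp
    omega

theorem IsLandmarkSet.separates_of_eq_pair {a b u w : V} (hL : IsLandmarkSet T {a, b})
    (huw : u ≠ w) (hu : u ∉ ({a, b} : Set V)) (hw : w ∉ ({a, b} : Set V)) :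
    Separates T a u w ∧ Separates T b u w := by
  obtain ⟨τ₁, h₁, τ₂, h₂, hne, hs₁, hs₂⟩ := hL u w huw hu hw
  simp only [Set.mem_insert_iff, Set.mem_singleton_iff] at h₁ h₂
  rcases h₁ with rfl | rfl <;> rcases h₂ with rfl | rfl
  · exact absurd rfl hne
  · exact ⟨hs₁, hs₂⟩
  · exact ⟨hs₂, hs₁⟩
  · exact absurd rfl hne

theorem IsLocalSet.exists_inter_branch_nonempty [Fintype V] [DecidableRel T.Adj] {S : Set V}
    (hS : IsLocalSet T v S) (hdeg : 3 ≤ T.degree v)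
    (hlegs : ∀ x, T.Adj v x → IsStandardLeg T v x) :
    ∃ x y, x ≠ y ∧ T.Adj v x ∧ T.Adj v y ∧
      (S ∩ Branch T v x).Nonempty ∧ (S ∩ Branch T v y).Nonempty := by
  have hS0 : ∀ s t, T.Adj v s → T.Adj v t → s ≠ t →
      (S ∩ Branch T v s).Nonempty ∨ (S ∩ Branch T v t).Nonempty := by
    intro s t hs ht hst
    by_contra! h
    exact hS.2.1 s t (hlegs s hs) (hlegs t ht) hst h.1 h.2
  obtain ⟨a, ha, -⟩ := exists_adj_ne_ne_of_three_le_degree hdeg v v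
  obtain ⟨b, hb, hba, -⟩ := exists_adj_ne_ne_of_three_le_degree hdeg a a
  obtain ⟨c, hc, hca, hcb⟩ := exists_adj_ne_ne_of_three_le_degree hdeg a b
  by_cases hA : (S ∩ Branch T v a).Nonempty
  · by_cases hB : (S ∩ Branch T v b).Nonempty
    · exact ⟨a, b, hba.symm, ha, hb, hA, hB⟩
    · exact ⟨a, c, hca.symm, ha, hc, hA, (hS0 b c hb hc hcb.symm).resolve_left hB⟩
  · exact ⟨b, c, hcb.symm, hb, hc, (hS0 a b ha hb hba.symm).resolve_left hA,
      (hS0 a c ha hc hca.symm).resolve_left hA⟩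

/-- Otherwise `σ₂` would not separate `t₁` from the root of a third branch. -/
theorem eq_of_isLandmarkSet_pair_of_mem_branch (hT : T.IsTree) {t₃ : V}
    (h12 : t₁ ≠ t₂) (h13 : t₁ ≠ t₃) (h23 : t₂ ≠ t₃)
    (ha1 : T.Adj v t₁) (ha2 : T.Adj v t₂) (ha3 : T.Adj v t₃)
    (hσ₁ : σ₁ ∈ Branch T v t₁) (hσ₂ : σ₂ ∈ Branch T v t₂) (hL : IsLandmarkSet T {σ₁, σ₂}) :
    σ₁ = t₁ := by
  by_contra hne
  have hd₁₂ := branch_disjoint hT ha1 ha2 h12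
  have hd₃₁ := branch_disjoint hT ha3 ha1 h13.symm
  have hd₃₂ := branch_disjoint hT ha3 ha2 h23.symm
  have ht₁ : t₁ ∉ ({σ₁, σ₂} : Set V) := by
    rintro (h | h)
    · exact hne h.symm
    · exact hd₁₂.ne_of_mem (self_mem_branch ha1) hσ₂ h
  have ht₃ : t₃ ∉ ({σ₁, σ₂} : Set V) := by
    rintro (h | h)
    · exact hd₃₁.ne_of_mem (self_mem_branch ha3) hσ₁ h
    · exact hd₃₂.ne_of_mem (self_mem_branch ha3) hσ₂ h
  have e₁ := dist_eq_add_one_of_notMem_branch hT ha1 (Set.disjoint_right.mp hd₁₂ hσ₂)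
  have e₃ := dist_eq_add_one_of_notMem_branch hT ha3 (Set.disjoint_right.mp hd₃₂ hσ₂)
  apply (hL.separates_of_eq_pair h13.symm ht₃ ht₁).2
  rw [SimpleGraph.dist_comm, e₃, SimpleGraph.dist_comm (u := σ₂), e₁]

/-- Otherwise `t₁` would not separate `v` from the vertex at position 2 of its leg. -/
theorem isShortLeg_of_isLandmarkSet_pair [Fintype V] [DecidableRel T.Adj] (hT : T.IsTree)
    (h12 : t₁ ≠ t₂) (hleg : IsStandardLeg T v t₁) (ha2 : T.Adj v t₂) (hσ₂ : σ₂ ∈ Branch T v t₂)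
    (hL : IsLandmarkSet T {t₁, σ₂}) : IsShortLeg T v t₁ := by
  refine ⟨hleg, ?_⟩
  by_contra hlong
  obtain ⟨w, hw, hvw⟩ := exists_mem_branch_dist_eq_two hT hleg.1 hlong
  have hd := branch_disjoint hT hleg.1 ha2 h12
  have hvt₁ : T.dist v t₁ = 1 := dist_eq_one_iff_adj.mpr hleg.1
  have ht₁v : T.dist t₁ v = 1 := dist_eq_one_iff_adj.mpr hleg.1.symm
  have hwL : w ∉ ({t₁, σ₂} : Set V) := by
    rintro (rfl | h)
    · omega
    · exact hd.ne_of_mem hw hσ₂ h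
  have hvL : v ∉ ({t₁, σ₂} : Set V) := by
    rintro (h | h)
    · exact hleg.1.ne h
    · rw [← h, mem_branch, SimpleGraph.dist_self] at hσ₂
      omega
  have hwv : w ≠ v := by
    rintro rfl
    rw [SimpleGraph.dist_self] at hvw
    omega
  rw [mem_branch] at hw
  exact (hL.separates_of_eq_pair hwv hwL hvL).1 (by omega)

theorem IsShortLeg.dist_eq_add_one [Fintype V] [DecidableRel T.Adj] (hx : IsShortLeg T v x)
    (hT : T.IsTree) (hu : u ≠ x) : T.dist x u = T.dist v u + 1 :=
  dist_eq_add_one_of_notMem_branch hT hx.1.1 (by rw [hx.2]; exact hu)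

theorem eq_and_isShortLeg_of_isLandmarkSet_pair [Fintype V] [DecidableRel T.Adj]
    (hT : T.IsTree) (hdeg : 3 ≤ T.degree v) (hlegs : ∀ x, T.Adj v x → IsStandardLeg T v x)
    (h12 : t₁ ≠ t₂) (ha1 : T.Adj v t₁) (ha2 : T.Adj v t₂) (hσ₁ : σ₁ ∈ Branch T v t₁)
    (hσ₂ : σ₂ ∈ Branch T v t₂) (hL : IsLandmarkSet T {σ₁, σ₂}) :
    σ₁ = t₁ ∧ IsShortLeg T v t₁ := by
  obtain ⟨t₃, ha3, h31, h32⟩ := exists_adj_ne_ne_of_three_le_degree hdeg t₁ t₂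
  obtain rfl :=
    eq_of_isLandmarkSet_pair_of_mem_branch hT h12 h31.symm h32.symm ha1 ha2 ha3 hσ₁ hσ₂ hL
  exact ⟨rfl, isShortLeg_of_isLandmarkSet_pair hT h12 (hlegs σ₁ ha1) ha2 hσ₂ hL⟩

theorem injOn_dist_compl_pair_of_isShortLeg [Fintype V] [DecidableRel T.Adj] (hT : T.IsTree)
    (hdeg : T.degree v = 3) (hlegs : ∀ x, T.Adj v x → IsStandardLeg T v x) (hxy : x ≠ y)
    (hx : IsShortLeg T v x) (hy : IsShortLeg T v y) :
    Set.InjOn (T.dist v) ({x, y} : Set V)ᶜ := by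
  have hbranch : ∀ u ∉ ({x, y} : Set V), u ≠ v →
      ∃ t, T.Adj v t ∧ t ≠ x ∧ t ≠ y ∧ u ∈ Branch T v t := by
    intro u hu huv
    obtain ⟨t, ht, hut⟩ := exists_mem_branch_of_ne hT.connected huv
    refine ⟨t, ht, ?_, ?_, hut⟩ <;> rintro rfl
    · rw [hx.2] at hut
      exact hu (Or.inl hut)
    · rw [hy.2] at hut
      exact hu (Or.inr hut)
  intro u hu w hw huw
  by_cases huv : u = v
  · subst huv
    exact hT.connected.dist_eq_zero_iff.mp (by rw [← huw, SimpleGraph.dist_self])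
  by_cases hwv : w = v
  · subst hwv
    exact (hT.connected.dist_eq_zero_iff.mp (by rw [huw, SimpleGraph.dist_self])).symm
  obtain ⟨t, ht, htx, hty, hut⟩ := hbranch u hu huv
  obtain ⟨t', ht', htx', hty', hwt'⟩ := hbranch w hw hwv
  obtain rfl : t = t' :=
    eq_of_adj_of_degree_eq_three hdeg hxy hx.1.1 hy.1.1 ht ht' htx hty htx' hty'
  exact (hlegs t ht).injOn_dist hT hut hwt' huw

theorem isLandmarkSet_pair_of_isShortLeg [Fintype V] [DecidableRel T.Adj] (hT : T.IsTree)
    (hdeg : T.degree v = 3) (hlegs : ∀ x, T.Adj v x → IsStandardLeg T v x) (hxy : x ≠ y)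
    (hx : IsShortLeg T v x) (hy : IsShortLeg T v y) : IsLandmarkSet T {x, y} := by
  intro u w huw hu hw
  have hdist : T.dist v u ≠ T.dist v w := fun h =>
    huw (injOn_dist_compl_pair_of_isShortLeg hT hdeg hlegs hxy hx hy hu hw h)
  refine ⟨x, by simp, y, by simp, hxy, ?_, ?_⟩
  · rw [Separates, hx.dist_eq_add_one hT (by rintro rfl; simp at hu),
      hx.dist_eq_add_one hT (by rintro rfl; simp at hw)]
    omega
  · rw [Separates, hy.dist_eq_add_one hT (by rintro rfl; simp at hu),
      hy.dist_eq_add_one hT (by rintro rfl; simp at hw)]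
    omega

end LandmarksInTrees

theorem single_small_core_two_landmarks_iff_general
    (T : SimpleGraph V) [DecidableRel T.Adj] (hT : T.IsTree)
    (v : V) (hv : IsSmallCore T v)
    (hlegs : ∀ x : V, T.Adj v x → IsStandardLeg T v x)
    (L : Set V) (hloc : ∃ S : Set V, S ⊆ L ∧ IsLocalSet T v S)
    (hcard : L.ncard ≤ 2) :
    IsLandmarkSet T L ↔
      ∃ x y : V, x ≠ y ∧ IsShortLeg T v x ∧ IsShortLeg T v y ∧ L = {x, y} := by
  have hdeg : T.degree v = 3 := hv.1
  constructor
  · intro hL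
    obtain ⟨S, hSL, hS⟩ := hloc
    obtain ⟨t₁, t₂, h12, ha1, ha2, ⟨σ₁, hσ₁S, hσ₁⟩, ⟨σ₂, hσ₂S, hσ₂⟩⟩ :=
      hS.exists_inter_branch_nonempty hdeg.ge hlegs
    have hσ : σ₁ ≠ σ₂ := (branch_disjoint hT ha1 ha2 h12).ne_of_mem hσ₁ hσ₂
    obtain rfl : L = {σ₁, σ₂} := (Set.eq_of_subset_of_ncard_le
      (Set.insert_subset (hSL hσ₁S) (Set.singleton_subset_iff.mpr (hSL hσ₂S)))
      (by rw [Set.ncard_pair hσ]; exact hcard)).symm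
    obtain ⟨rfl, hs₁⟩ :=
      eq_and_isShortLeg_of_isLandmarkSet_pair hT hdeg.ge hlegs h12 ha1 ha2 hσ₁ hσ₂ hL
    obtain ⟨rfl, hs₂⟩ := eq_and_isShortLeg_of_isLandmarkSet_pair hT hdeg.ge hlegs h12.symm
      ha2 ha1 hσ₂ hσ₁ (Set.pair_comm σ₁ σ₂ ▸ hL)
    exact ⟨σ₁, σ₂, h12, hs₁, hs₂, rfl⟩
  · rintro ⟨x, y, hxy, hx, hy, rfl⟩
    exact isLandmarkSet_pair_of_isShortLeg hT hdeg hlegs hxy hx hy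

/-- a tree whose only core `v` is a small core with three standard legs;
if `L` contains a local set for `v` and `|L| ≤ 2`, then `L` is a landmark set iff `L`
consists of the two vertices of two short legs of `v`. -/
theorem single_small_core_two_landmarks_iff
    (T : SimpleGraph V) [DecidableRel T.Adj] (hT : T.IsTree)
    (v : V) (hv : IsSmallCore T v) (huniq : ∀ w : V, IsCore T w → w = v)
    (hlegs : ∀ x : V, T.Adj v x → IsStandardLeg T v x)
    (L : Set V) (hloc : ∃ S : Set V, S ⊆ L ∧ IsLocalSet T v S)
    (hcard : L.ncard ≤ 2) :
    IsLandmarkSet T L ↔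
      ∃ x y : V, x ≠ y ∧ IsShortLeg T v x ∧ IsShortLeg T v y ∧ L = {x, y} :=
  single_small_core_two_landmarks_iff_general T hT v hv hlegs L hloc hcard
end
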